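/- Suppose Condition 1 holds. Then the Fenchel conjugate Ω_T^* of the convolutional negentropy Ω_T = Ω + T is proper convex and lower semicontinuous with dom(Ω_T^*) = ℝ^ϱ, and for every θ ∈ ℝ^ϱ it satisfies Ω_T^*(θ) = inf_{π ∈ Δ^N} Ω^*(θ + L^ρ π); moreover, for every θ ∈ ℝ^ϱ this infimum is attained by some π ∈ Δ^N. -/

import Mathlib

open scoped BigOperators
noncomputable section

/-- Score/probability space: `ℝ^ϱ` with Euclidean structure. -/
abbrev E (ϱ : ℕ) : Type := EuclideanSpace ℝ (Fin ϱ)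

/-- Euclidean dot product `⟨θ, p⟩`. -/
def dot {ϱ : ℕ} (θ p : E ϱ) : ℝ := ∑ i, θ i * p i

/-- Fenchel conjugate of an extended-real-valued function:
`Ω^*(θ) = sup_{p ∈ dom Ω} ⟨θ, p⟩ − Ω(p)`. -/
def conj {ϱ : ℕ} (f : E ϱ → EReal) (θ : E ϱ) : EReal :=
  ⨆ p ∈ {q : E ϱ | f q ≠ ⊤}, (((dot θ p : ℝ) : EReal) - f p)

/-- Convexity for extended-real-valued functions. -/
def ErealConvex {ϱ : ℕ} (f : E ϱ → EReal) : Prop :=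
  ∀ p q : E ϱ, ∀ a b : ℝ, 0 ≤ a → 0 ≤ b → a + b = 1 →
    f (a • p + b • q) ≤ (a : EReal) * f p + (b : EReal) * f q

/-- `T(p) = − min_{t ∈ Ŷ} ⟨p, ℓ^ρ(t)⟩`. -/
def Tfun {ϱ N : ℕ} (ℓρ : Fin N → E ϱ) (p : E ϱ) : ℝ := - ⨅ t, dot p (ℓρ t)

/-- The convolutional negentropy `Ω_T = Ω + T`. -/
def OmegaT {ϱ N : ℕ} (Ω : E ϱ → EReal) (ℓρ : Fin N → E ϱ) (p : E ϱ) : EReal :=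
  Ω p + ((Tfun ℓρ p : ℝ) : EReal)

/-- Loss-matrix action: `L^ρ π = Σ_t π_t ℓ^ρ(t)`. -/
def Lrho {ϱ N : ℕ} (ℓρ : Fin N → E ϱ) (π : Fin N → ℝ) : E ϱ :=
  WithLp.toLp 2 (fun i => ∑ t, π t * ℓρ t i)

/-- Condition 1: Ω proper convex l.s.c., `conv(ρ(𝒴)) ⊆ dom Ω`, `dom Ω^* = ℝ^ϱ`. -/
def Condition1 {ϱ K : ℕ} (Ω : E ϱ → EReal) (ρ : Fin K → E ϱ) : Prop :=
  (∀ p, Ω p ≠ ⊥) ∧ (∃ p, Ω p ≠ ⊤) ∧ ErealConvex Ω ∧ LowerSemicontinuous Ω ∧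
  (convexHull ℝ (Set.range ρ) ⊆ {p : E ϱ | Ω p ≠ ⊤}) ∧ (∀ θ : E ϱ, conj Ω θ ≠ ⊤)

/-- `Π(θ) = argmin_{π ∈ Δ^N} Ω^*(θ + L^ρ π)`. -/
def Pii {ϱ N : ℕ} (Ω : E ϱ → EReal) (ℓρ : Fin N → E ϱ) (θ : E ϱ) : Set (Fin N → ℝ) :=
  {π | π ∈ stdSimplex ℝ (Fin N) ∧
       ∀ π' ∈ stdSimplex ℝ (Fin N), conj Ω (θ + Lrho ℓρ π) ≤ conj Ω (θ + Lrho ℓρ π')}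

/-- The convolutional Fenchel–Young loss `L_{Ω_T}(θ, y) = Ω_T^*(θ) + Ω_T(ρ(y)) − ⟨θ, ρ(y)⟩`. -/
def LossFY {ϱ N K : ℕ} (Ω : E ϱ → EReal) (ρ : Fin K → E ϱ) (ℓρ : Fin N → E ϱ)
    (θ : E ϱ) (y : Fin K) : ℝ :=
  (conj (OmegaT Ω ℓρ) θ).toReal + (OmegaT Ω ℓρ (ρ y)).toReal - dot θ (ρ y)

/-- Surrogate risk of the convolutional Fenchel–Young loss. -/
def RsurL {ϱ N K : ℕ} (Ω : E ϱ → EReal) (ρ : Fin K → E ϱ) (ℓρ : Fin N → E ϱ)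
    (θ : E ϱ) (η : Fin K → ℝ) : ℝ :=
  ∑ y, η y * LossFY Ω ρ ℓρ θ y

/-- Surrogate regret of the convolutional Fenchel–Young loss. -/
def RegSur {ϱ N K : ℕ} (Ω : E ϱ → EReal) (ρ : Fin K → E ϱ) (ℓρ : Fin N → E ϱ)
    (θ : E ϱ) (η : Fin K → ℝ) : ℝ :=
  RsurL Ω ρ ℓρ θ η - ⨅ θ' : E ϱ, RsurL Ω ρ ℓρ θ' η

/-- Target regret of a discrete prediction `t` under target loss `ℓ`. -/
def RegTar {N K : ℕ} (ℓ : Fin N → Fin K → ℝ) (t : Fin N) (η : Fin K → ℝ) : ℝ :=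
  (∑ y, η y * ℓ t y) - ⨅ t' : Fin N, ∑ y, η y * ℓ t' y

/-- Real-valued version of a finite Fenchel conjugate. -/
def starFn {ϱ : ℕ} (f : E ϱ → EReal) (θ : E ϱ) : ℝ := (conj f θ).toReal


section AuxLemmas
variable {ϱ N : ℕ}

lemma dot_comm (x y : E ϱ) : dot x y = dot y x := by simp [dot, mul_comm]

lemma dot_add_left (x y p : E ϱ) : dot (x + y) p = dot x p + dot y p := by
  simp [dot, add_mul, Finset.sum_add_distrib]

lemma dot_smul_left (a : ℝ) (x p : E ϱ) : dot (a • x) p = a * dot x p := by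
  simp [dot, Finset.mul_sum, mul_assoc]

lemma dot_neg_left (x p : E ϱ) : dot (-x) p = - dot x p := by
  simp [dot]

lemma dot_continuous (p : E ϱ) : Continuous fun θ : E ϱ => dot θ p := by
  refine continuous_finset_sum _ fun i _ => ?_
  exact ((EuclideanSpace.proj i : E ϱ →L[ℝ] ℝ).continuous).mul continuous_const

lemma dot_rep (φ : E ϱ →L[ℝ] ℝ) : ∃ v : E ϱ, ∀ p : E ϱ, φ p = dot p v := by
  refine ⟨(WithLp.toLp 2 (fun i => φ (EuclideanSpace.single i 1)) : E ϱ), fun p => ?_⟩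
  have hp : ∑ i, p i • EuclideanSpace.single i (1:ℝ) = p := by
    have := (EuclideanSpace.basisFun (Fin ϱ) ℝ).sum_repr p
    simpa [EuclideanSpace.basisFun_apply, EuclideanSpace.basisFun_repr] using this
  conv_lhs => rw [← hp]
  rw [map_sum]
  simp [dot, smul_eq_mul]

lemma le_conj (f : E ϱ → EReal) {p : E ϱ} (hp : f p ≠ ⊤) (θ : E ϱ) :
    (((dot θ p : ℝ) : EReal) - f p) ≤ conj f θ :=
  le_iSup₂ (f := fun q (_ : q ∈ {q : E ϱ | f q ≠ ⊤}) => (((dot θ q : ℝ) : EReal) - f q)) p hp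

lemma conj_le {f : E ϱ → EReal} {θ : E ϱ} {c : EReal}
    (h : ∀ p, f p ≠ ⊤ → (((dot θ p : ℝ) : EReal) - f p) ≤ c) : conj f θ ≤ c :=
  iSup₂_le h

section M
variable [Nonempty (Fin N)] (ℓρ : Fin N → E ϱ)

/-- `m(p) = min_t ⟨p, ℓρ t⟩`. -/
def mfun (p : E ϱ) : ℝ := ⨅ t, dot p (ℓρ t)

omit [Nonempty (Fin N)] in
lemma Tfun_eq (p : E ϱ) : Tfun ℓρ p = - mfun ℓρ p := rfl

lemma mfun_le (p : E ϱ) (t : Fin N) : mfun ℓρ p ≤ dot p (ℓρ t) :=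
  ciInf_le (Set.finite_range _).bddBelow t

lemma le_mfun {c : ℝ} {p : E ϱ} (h : ∀ t, c ≤ dot p (ℓρ t)) : c ≤ mfun ℓρ p :=
  le_ciInf h

lemma exists_mfun_eq (p : E ϱ) : ∃ t, mfun ℓρ p = dot p (ℓρ t) := by
  obtain ⟨t, ht⟩ := Finite.exists_min fun t => dot p (ℓρ t)
  exact ⟨t, le_antisymm (mfun_le ℓρ p t) (le_mfun ℓρ fun t' => ht t')⟩

lemma mfun_zero : mfun ℓρ (0 : E ϱ) = 0 := by
  obtain ⟨t, ht⟩ := exists_mfun_eq ℓρ (0 : E ϱ)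
  rw [ht, dot_comm]
  simp [dot]

lemma mfun_smul {a : ℝ} (ha : 0 ≤ a) (p : E ϱ) : mfun ℓρ (a • p) = a * mfun ℓρ p := by
  refine le_antisymm ?_ ?_
  · obtain ⟨t, ht⟩ := exists_mfun_eq ℓρ p
    calc mfun ℓρ (a • p) ≤ dot (a • p) (ℓρ t) := mfun_le ℓρ _ t
    _ = a * dot p (ℓρ t) := dot_smul_left a p (ℓρ t)
    _ = a * mfun ℓρ p := by rw [ht]
  · refine le_mfun ℓρ fun t => ?_
    rw [dot_smul_left]
    exact mul_le_mul_of_nonneg_left (mfun_le ℓρ p t) ha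

lemma mfun_concave {a b : ℝ} (ha : 0 ≤ a) (hb : 0 ≤ b) (p q : E ϱ) :
    a * mfun ℓρ p + b * mfun ℓρ q ≤ mfun ℓρ (a • p + b • q) := by
  refine le_mfun ℓρ fun t => ?_
  rw [dot_add_left, dot_smul_left, dot_smul_left]
  have h1 := mul_le_mul_of_nonneg_left (mfun_le ℓρ p t) ha
  have h2 := mul_le_mul_of_nonneg_left (mfun_le ℓρ q t) hb
  linarith

lemma mfun_continuous : Continuous (mfun ℓρ) := by
  have h : Continuous (Finset.univ.inf' Finset.univ_nonempty
      fun t => fun p : E ϱ => dot p (ℓρ t)) :=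
    Continuous.finset_inf' Finset.univ_nonempty fun t _ => dot_continuous (ℓρ t)
  have he : mfun ℓρ = Finset.univ.inf' Finset.univ_nonempty
      fun t => fun p : E ϱ => dot p (ℓρ t) := by
    funext p
    rw [Finset.inf'_apply, Finset.inf'_univ_eq_ciInf]
    rfl
  rw [he]; exact h

omit [Nonempty (Fin N)] in
lemma dot_Lrho (p : E ϱ) (π : Fin N → ℝ) :
    dot p (Lrho ℓρ π) = ∑ t, π t * dot p (ℓρ t) := by
  simp only [dot, Lrho, PiLp.toLp_apply, Finset.mul_sum]
  rw [Finset.sum_comm]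
  congr 1; funext t; congr 1; funext i; ring

lemma mfun_le_dot_Lrho {π : Fin N → ℝ} (hπ : π ∈ stdSimplex ℝ (Fin N)) (p : E ϱ) :
    mfun ℓρ p ≤ dot p (Lrho ℓρ π) := by
  rw [dot_Lrho]
  calc mfun ℓρ p = ∑ t, π t * mfun ℓρ p := by
        rw [← Finset.sum_mul, hπ.2, one_mul]
  _ ≤ ∑ t, π t * dot p (ℓρ t) :=
      Finset.sum_le_sum fun t _ => mul_le_mul_of_nonneg_left (mfun_le ℓρ p t) (hπ.1 t)

end M

section OT
variable [Nonempty (Fin N)] {Ω : E ϱ → EReal} (ℓρ : Fin N → E ϱ)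

lemma OmegaT_eq (hbot : ∀ p, Ω p ≠ ⊥) {p : E ϱ} (ht : Ω p ≠ ⊤) :
    OmegaT Ω ℓρ p = (((Ω p).toReal + Tfun ℓρ p : ℝ) : EReal) := by
  rw [OmegaT, ← EReal.coe_toReal ht (hbot p)]
  norm_cast

lemma OmegaT_ne_bot (hbot : ∀ p, Ω p ≠ ⊥) (p : E ϱ) : OmegaT Ω ℓρ p ≠ ⊥ := by
  rw [OmegaT]
  simp [EReal.add_eq_bot_iff, hbot p]

lemma OmegaT_ne_top_iff (hbot : ∀ p, Ω p ≠ ⊥) {p : E ϱ} : OmegaT Ω ℓρ p ≠ ⊤ ↔ Ω p ≠ ⊤ := by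
  constructor
  · intro h hc
    rw [OmegaT, hc, EReal.top_add_coe] at h
    exact h rfl
  · intro h
    rw [OmegaT_eq ℓρ hbot h]
    exact EReal.coe_ne_top _

/-- The easy direction. -/
lemma conj_OmegaT_le (hbot : ∀ p, Ω p ≠ ⊥) {π : Fin N → ℝ} (hπ : π ∈ stdSimplex ℝ (Fin N)) (θ : E ϱ) :
    conj (OmegaT Ω ℓρ) θ ≤ conj Ω (θ + Lrho ℓρ π) := by
  refine conj_le fun p hp => ?_
  have hΩt : Ω p ≠ ⊤ := (OmegaT_ne_top_iff ℓρ hbot).mp hp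
  set r : ℝ := (Ω p).toReal with hr
  have h1 : (((dot (θ + Lrho ℓρ π) p : ℝ) : EReal) - Ω p) ≤ conj Ω (θ + Lrho ℓρ π) :=
    le_conj Ω hΩt _
  rw [← EReal.coe_toReal hΩt (hbot p), ← hr] at h1
  rw [OmegaT_eq ℓρ hbot hΩt, ← hr]
  refine le_trans ?_ h1
  rw [← EReal.coe_sub, ← EReal.coe_sub, EReal.coe_le_coe_iff, Tfun_eq,
    dot_add_left, dot_comm (Lrho ℓρ π) p]
  have := mfun_le_dot_Lrho ℓρ hπ p
  linarith

end OT

end AuxLemmas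

section KeyLemma
variable {ϱ N : ℕ} [Nonempty (Fin N)]

lemma convexHull_range_subset (ℓρ : Fin N → E ϱ) :
    convexHull ℝ (Set.range ℓρ) ⊆ {x : E ϱ | ∃ π ∈ stdSimplex ℝ (Fin N), x = Lrho ℓρ π} := by
  refine convexHull_min ?_ ?_
  · rintro x ⟨t, rfl⟩
    refine ⟨Pi.single t 1, ⟨fun j => ?_, ?_⟩, ?_⟩
    · rcases eq_or_ne j t with rfl | hj
      · simp
      · simp [Pi.single_apply, hj]
    · simp [Pi.single_apply]
    · refine (PiLp.ext fun i => ?_ : (ℓρ t : E ϱ) = Lrho ℓρ (Pi.single t 1))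
      simp [Lrho, Pi.single_apply]
  · rintro x ⟨π₁, hπ₁, rfl⟩ y ⟨π₂, hπ₂, rfl⟩ a b ha hb hab
    refine ⟨a • π₁ + b • π₂, (convex_stdSimplex ℝ (Fin N)) hπ₁ hπ₂ ha hb hab, ?_⟩
    refine (PiLp.ext fun i => ?_ :
      a • Lrho ℓρ π₁ + b • Lrho ℓρ π₂ = Lrho ℓρ (a • π₁ + b • π₂))
    show a * (∑ t, π₁ t * ℓρ t i) + b * (∑ t, π₂ t * ℓρ t i)
        = ∑ t, (a * π₁ t + b * π₂ t) * ℓρ t i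
    rw [Finset.mul_sum, Finset.mul_sum, ← Finset.sum_add_distrib]
    congr 1; funext t; ring

/-- The key separation lemma: the infimum value is attained and bounds the conjugate. -/
lemma key_attain (Ω : E ϱ → EReal) (ℓρ : Fin N → E ϱ)
    (hbot : ∀ p, Ω p ≠ ⊥) (hconv : ErealConvex Ω) (hdomne : ∃ p, Ω p ≠ ⊤)
    (θ : E ϱ) (C : ℝ) (hC : conj (OmegaT Ω ℓρ) θ = (C : EReal)) :
    ∃ π ∈ stdSimplex ℝ (Fin N), conj Ω (θ + Lrho ℓρ π) ≤ (C : EReal) := by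
  -- the upper bound coming from the conjugate value
  have hub : ∀ p : E ϱ, Ω p ≠ ⊤ → dot θ p - ((Ω p).toReal - mfun ℓρ p) ≤ C := by
    intro p hp
    have h := le_conj (OmegaT Ω ℓρ) ((OmegaT_ne_top_iff ℓρ hbot).mpr hp) θ
    rw [hC, OmegaT_eq ℓρ hbot hp, ← EReal.coe_sub, EReal.coe_le_coe_iff, Tfun_eq] at h
    linarith
  -- the two convex sets to be separated
  set A : Set (E ϱ × ℝ) := {x | Ω x.1 ≠ ⊤ ∧ (Ω x.1).toReal - dot θ x.1 ≤ x.2} with hA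
  set B : Set (E ϱ × ℝ) := {x | x.2 < mfun ℓρ x.1 - C} with hB
  have hAconv : Convex ℝ A := by
    rintro x ⟨hx1, hx2⟩ y ⟨hy1, hy2⟩ a b ha hb hab
    have hcomb := hconv x.1 y.1 a b ha hb hab
    rw [← EReal.coe_toReal hx1 (hbot _), ← EReal.coe_toReal hy1 (hbot _)] at hcomb
    have hcoe : (a : EReal) * (((Ω x.1).toReal : ℝ) : EReal)
        + (b : EReal) * (((Ω y.1).toReal : ℝ) : EReal)
        = ((a * (Ω x.1).toReal + b * (Ω y.1).toReal : ℝ) : EReal) := by norm_cast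
    rw [hcoe] at hcomb
    have hzt : Ω (a • x.1 + b • y.1) ≠ ⊤ := ne_top_of_le_ne_top (EReal.coe_ne_top _) hcomb
    have hle : (Ω (a • x.1 + b • y.1)).toReal
        ≤ a * (Ω x.1).toReal + b * (Ω y.1).toReal := by
      have h := EReal.toReal_le_toReal hcomb (hbot _) (EReal.coe_ne_top _)
      rwa [EReal.toReal_coe] at h
    have hd : dot θ (a • x.1 + b • y.1) = a * dot θ x.1 + b * dot θ y.1 := by
      rw [dot_comm, dot_add_left, dot_smul_left, dot_smul_left,
        dot_comm x.1 θ, dot_comm y.1 θ]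
    have hfst : (a • x + b • y).1 = a • x.1 + b • y.1 := rfl
    have hsnd : (a • x + b • y).2 = a * x.2 + b * y.2 := rfl
    refine ⟨by rw [hfst]; exact hzt, ?_⟩
    rw [hfst, hsnd, hd]
    have h3 := mul_le_mul_of_nonneg_left hx2 ha
    have h4 := mul_le_mul_of_nonneg_left hy2 hb
    nlinarith [h3, h4, hle]
  have hBconv : Convex ℝ B := by
    rintro x hx y hy a b ha hb hab
    simp only [hB, Set.mem_setOf_eq] at hx hy
    show (a • x + b • y).2 < mfun ℓρ (a • x + b • y).1 - C
    have hfst : (a • x + b • y).1 = a • x.1 + b • y.1 := rfl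
    have hsnd : (a • x + b • y).2 = a * x.2 + b * y.2 := rfl
    rw [hfst, hsnd]
    rcases eq_or_lt_of_le ha with heq | hpos
    · have ha0 : a = 0 := heq.symm
      subst ha0
      have hb1 : b = 1 := by linarith
      subst hb1
      simpa using hy
    · have h1 : a * x.2 < a * (mfun ℓρ x.1 - C) := by
        exact mul_lt_mul_of_pos_left hx hpos
      have h2 : b * y.2 ≤ b * (mfun ℓρ y.1 - C) := mul_le_mul_of_nonneg_left hy.le hb
      have h3 := mfun_concave ℓρ ha hb x.1 y.1
      have hX : a * C + b * C = C := by rw [← add_mul, hab, one_mul]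
      nlinarith [h1, h2, h3, hX]
  have hBopen : IsOpen B :=
    isOpen_lt continuous_snd (((mfun_continuous ℓρ).comp continuous_fst).sub continuous_const)
  have hdisj : Disjoint B A := by
    rw [Set.disjoint_left]
    rintro x hxB ⟨hx1, hx2⟩
    have h := hub x.1 hx1
    simp only [hB, Set.mem_setOf_eq] at hxB
    linarith
  obtain ⟨f, u, hfB, hfA⟩ := geometric_hahn_banach_open hBconv hBopen hAconv hdisj
  set g : E ϱ → ℝ := fun p => f (p, 0) with hg
  set β : ℝ := f (0, 1) with hβd
  have hsplit : ∀ (p : E ϱ) (r : ℝ), f (p, r) = g p + r * β := by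
    intro p r
    have hpr : (p, r) = (p, 0) + r • ((0 : E ϱ), (1 : ℝ)) := by
      simp [Prod.ext_iff]
    rw [hpr, map_add, map_smul, smul_eq_mul]
  have hfB' : ∀ (p : E ϱ) (r : ℝ), r < mfun ℓρ p - C → g p + r * β < u := by
    intro p r h
    have h2 := hfB (p, r) h
    rwa [hsplit] at h2
  have hfA' : ∀ p : E ϱ, Ω p ≠ ⊤ → u ≤ g p + ((Ω p).toReal - dot θ p) * β := by
    intro p h
    have h2 := hfA (p, (Ω p).toReal - dot θ p) ⟨h, le_rfl⟩
    rwa [hsplit] at h2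
  have hg0 : g 0 = 0 := by
    show f (0, 0) = 0
    rw [show ((0 : E ϱ), (0 : ℝ)) = (0 : E ϱ × ℝ) from rfl, map_zero]
  have hgsmul : ∀ (c : ℝ) (p : E ϱ), g (c • p) = c * g p := by
    intro c p
    show f (c • p, 0) = c * f (p, 0)
    rw [show (c • p, (0 : ℝ)) = c • (p, (0 : ℝ)) from by simp, map_smul, smul_eq_mul]
  have hβpos : 0 < β := by
    rcases lt_trichotomy β 0 with hneg | hzero | hpos
    · exfalso
      set r : ℝ := min (u / β) (-C - 1) with hr
      have h1 : r < mfun ℓρ 0 - C := by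
        rw [mfun_zero]
        calc r ≤ -C - 1 := min_le_right _ _
        _ < 0 - C := by linarith
      have h2 := hfB' 0 r h1
      rw [hg0, zero_add] at h2
      have h3 : r ≤ u / β := min_le_left _ _
      have h4 : u ≤ r * β := by
        rw [← div_mul_cancel₀ u (ne_of_lt hneg)]
        exact mul_le_mul_of_nonpos_right h3 hneg.le
      linarith
    · exfalso
      have hu_pos : 0 < u := by
        have h := hfB' 0 (-C - 1) (by rw [mfun_zero]; linarith)
        rw [hg0, hzero] at h
        simpa using h
      have hgle : ∀ p : E ϱ, g p < u := by
        intro p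
        have h := hfB' p (mfun ℓρ p - C - 1) (by linarith)
        rwa [hzero, mul_zero, add_zero] at h
      have hgnonpos : ∀ p : E ϱ, g p ≤ 0 := by
        intro p
        by_contra h
        push_neg at h
        have h2 := hgle ((2 * u / g p) • p)
        rw [hgsmul, div_mul_cancel₀ _ (ne_of_gt h)] at h2
        linarith
      obtain ⟨p₀, hp₀⟩ := hdomne
      have h5 := hfA' p₀ hp₀
      rw [hzero, mul_zero, add_zero] at h5
      linarith [hgnonpos p₀]
    · exact hpos
  have hB2 : ∀ p : E ϱ, g p + (mfun ℓρ p - C) * β ≤ u := by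
    intro p
    by_contra h
    push_neg at h
    set ε : ℝ := (g p + (mfun ℓρ p - C) * β - u) / β with hεd
    have hεpos : 0 < ε := div_pos (by linarith) hβpos
    have h1 := hfB' p (mfun ℓρ p - C - ε) (by linarith)
    have h2 : ε * β = g p + (mfun ℓρ p - C) * β - u :=
      div_mul_cancel₀ _ (ne_of_gt hβpos)
    have h3 : (mfun ℓρ p - C - ε) * β = (mfun ℓρ p - C) * β - ε * β := by ring
    linarith
  have hD : 0 ≤ u + C * β := by
    have h := hB2 0
    rw [hg0, mfun_zero] at h
    have h3 : (0 - C) * β = -(C * β) := by ring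
    linarith
  have hB3 : ∀ p : E ϱ, g p + mfun ℓρ p * β ≤ 0 := by
    intro p
    by_contra h
    push_neg at h
    set c : ℝ := g p + mfun ℓρ p * β with hcd
    set q : ℝ := (u + C * β + 1) / c with hqd
    have hqpos : 0 < q := div_pos (by linarith) h
    have h1 := hB2 (q • p)
    rw [hgsmul, mfun_smul ℓρ hqpos.le] at h1
    have h2 : q * c = u + C * β + 1 := div_mul_cancel₀ _ (ne_of_gt h)
    have h3 : (q * mfun ℓρ p - C) * β = q * (mfun ℓρ p * β) - C * β := by ring
    have h4 : q * c = q * g p + q * (mfun ℓρ p * β) := by rw [hcd]; ring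
    linarith
  obtain ⟨v, hv⟩ := dot_rep (f.comp (ContinuousLinearMap.inl ℝ (E ϱ) ℝ))
  have hgv : ∀ p : E ϱ, g p = dot p v := by
    intro p
    have h := hv p
    simp only [ContinuousLinearMap.comp_apply, ContinuousLinearMap.inl_apply] at h
    exact h
  set w : E ϱ := β⁻¹ • v with hwd
  have hdotw : ∀ p : E ϱ, dot p w = β⁻¹ * dot p v := by
    intro p
    rw [hwd, dot_comm, dot_smul_left, dot_comm v p]
  have hm0 : ∀ p : E ϱ, mfun ℓρ p ≤ dot p (-w) := by
    intro p
    have h1 := hB3 p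
    rw [hgv] at h1
    have h2 : dot p (-w) = -(β⁻¹ * dot p v) := by
      rw [dot_comm p (-w), dot_neg_left, dot_comm w p, hdotw]
    have hmul := mul_le_mul_of_nonneg_left h1 (inv_nonneg.mpr hβpos.le)
    rw [mul_zero] at hmul
    have h3 : β⁻¹ * (dot p v + mfun ℓρ p * β) = β⁻¹ * dot p v + mfun ℓρ p * (β⁻¹ * β) := by
      ring
    rw [inv_mul_cancel₀ (ne_of_gt hβpos), mul_one] at h3
    rw [h2]
    linarith
  have hmem : -w ∈ convexHull ℝ (Set.range ℓρ) := by
    by_contra hnm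
    obtain ⟨f₂, u₂, hf₂x, hf₂t⟩ := geometric_hahn_banach_point_closed
      (convex_convexHull ℝ _) ((Set.finite_range ℓρ).isClosed_convexHull (𝕜 := ℝ)) hnm
    obtain ⟨v₂, hv₂⟩ := dot_rep f₂
    have h1 : ∀ t, u₂ ≤ dot v₂ (ℓρ t) := by
      intro t
      have h := hf₂t (ℓρ t) (subset_convexHull ℝ _ (Set.mem_range_self t))
      rw [hv₂, dot_comm] at h
      exact h.le
    have h2 : u₂ ≤ mfun ℓρ v₂ := le_mfun ℓρ h1
    have h3 := hm0 v₂
    have h4 : f₂ (-w) = dot v₂ (-w) := by rw [hv₂, dot_comm]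
    rw [h4] at hf₂x
    linarith
  obtain ⟨π, hπ, hLw⟩ := convexHull_range_subset ℓρ hmem
  refine ⟨π, hπ, conj_le fun p hp => ?_⟩
  rw [← EReal.coe_toReal hp (hbot p), ← EReal.coe_sub, EReal.coe_le_coe_iff]
  have hd : dot (θ + Lrho ℓρ π) p = dot θ p - dot p w := by
    rw [dot_add_left, ← hLw, dot_neg_left, dot_comm w p]
    ring
  rw [hd]
  have hAineq := hfA' p hp
  rw [hgv] at hAineq
  have hpv : dot p v = β * dot p w := by
    rw [hdotw]
    field_simp
  rw [hpv] at hAineq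
  by_contra hcon
  push_neg at hcon
  have h5 : (dot p w + (Ω p).toReal - dot θ p) * β < -C * β :=
    mul_lt_mul_of_pos_right (by linarith) hβpos
  have h6 : (dot p w + (Ω p).toReal - dot θ p) * β
      = β * dot p w + ((Ω p).toReal - dot θ p) * β := by ring
  have h7 : -C * β = -(C * β) := by ring
  linarith

end KeyLemma

/-- Lemma 1 (Conjugate of Ω_T): under Condition 1, `Ω_T^*` is proper convex and l.s.c. with
`dom(Ω_T^*) = ℝ^ϱ`, equals `inf_{π ∈ Δ^N} Ω^*(θ + L^ρ π)`, and the infimum is attained. -/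
theorem conjugate_of_convolutional_negentropy
    {K N ϱ : ℕ} (hK : 0 < K) (hN : 0 < N) (hϱ : 0 < ϱ)
    (Ω : E ϱ → EReal) (ρ : Fin K → E ϱ) (ℓρ : Fin N → E ϱ)
    (hcond : Condition1 Ω ρ) :
    (∀ θ : E ϱ, conj (OmegaT Ω ℓρ) θ ≠ ⊥ ∧ conj (OmegaT Ω ℓρ) θ ≠ ⊤) ∧
    ErealConvex (conj (OmegaT Ω ℓρ)) ∧
    LowerSemicontinuous (conj (OmegaT Ω ℓρ)) ∧
    (∀ θ : E ϱ,
      conj (OmegaT Ω ℓρ) θ = ⨅ π ∈ stdSimplex ℝ (Fin N), conj Ω (θ + Lrho ℓρ π)) ∧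
    (∀ θ : E ϱ, ∃ π ∈ stdSimplex ℝ (Fin N),
      conj (OmegaT Ω ℓρ) θ = conj Ω (θ + Lrho ℓρ π)) := by
  haveI : Nonempty (Fin N) := ⟨⟨0, hN⟩⟩
  obtain ⟨hbot, hne, hconvΩ, hlsc, hdom, hstar⟩ := hcond
  -- uniform distribution, for non-⊤ of the conjugate
  have hπ0 : (fun _ : Fin N => (N : ℝ)⁻¹) ∈ stdSimplex ℝ (Fin N) := by
    constructor
    · intro t; positivity
    · have h : ∑ _t : Fin N, (N:ℝ)⁻¹ = (N : ℝ) * (N:ℝ)⁻¹ := by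
        simp [Finset.sum_const, Finset.card_univ, nsmul_eq_mul]
      rw [h, mul_inv_cancel₀ (by exact_mod_cast hN.ne')]
  have hproper : ∀ θ : E ϱ, conj (OmegaT Ω ℓρ) θ ≠ ⊥ ∧ conj (OmegaT Ω ℓρ) θ ≠ ⊤ := by
    intro θ
    constructor
    · obtain ⟨p₀, hp₀⟩ := hne
      have h1 := le_conj (OmegaT Ω ℓρ) ((OmegaT_ne_top_iff ℓρ hbot).mpr hp₀) θ
      rw [OmegaT_eq ℓρ hbot hp₀, ← EReal.coe_sub] at h1
      exact fun hc => by rw [hc] at h1; exact (EReal.bot_lt_coe _).not_ge h1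
    · have h2 := conj_OmegaT_le ℓρ hbot hπ0 θ
      exact fun hc => hstar _ (top_le_iff.mp (hc ▸ h2))
  have hkey : ∀ θ : E ϱ, ∃ π ∈ stdSimplex ℝ (Fin N),
      conj Ω (θ + Lrho ℓρ π) ≤ conj (OmegaT Ω ℓρ) θ := by
    intro θ
    obtain ⟨h1, h2⟩ := hproper θ
    obtain ⟨π, hπ, hle⟩ := key_attain Ω ℓρ hbot hconvΩ hne θ
      (conj (OmegaT Ω ℓρ) θ).toReal (EReal.coe_toReal h2 h1).symm
    exact ⟨π, hπ, by rwa [EReal.coe_toReal h2 h1] at hle⟩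
  refine ⟨hproper, ?_, ?_, ?_, ?_⟩
  · -- convexity
    intro p q a b ha hb hab
    obtain ⟨hp1, hp2⟩ := hproper p
    obtain ⟨hq1, hq2⟩ := hproper q
    set Cp : ℝ := (conj (OmegaT Ω ℓρ) p).toReal with hCp
    set Cq : ℝ := (conj (OmegaT Ω ℓρ) q).toReal with hCq
    have hre : (a : EReal) * conj (OmegaT Ω ℓρ) p + (b : EReal) * conj (OmegaT Ω ℓρ) q
        = ((a * Cp + b * Cq : ℝ) : EReal) := by
      rw [← EReal.coe_toReal hp2 hp1, ← EReal.coe_toReal hq2 hq1, ← hCp, ← hCq]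
      norm_cast
    rw [hre]
    refine conj_le fun x hx => ?_
    have hΩx : Ω x ≠ ⊤ := (OmegaT_ne_top_iff ℓρ hbot).mp hx
    have h1 := le_conj (OmegaT Ω ℓρ) hx p
    have h2 := le_conj (OmegaT Ω ℓρ) hx q
    rw [OmegaT_eq ℓρ hbot hΩx, ← EReal.coe_sub, ← EReal.coe_toReal hp2 hp1, ← hCp,
      EReal.coe_le_coe_iff] at h1
    rw [OmegaT_eq ℓρ hbot hΩx, ← EReal.coe_sub, ← EReal.coe_toReal hq2 hq1, ← hCq,
      EReal.coe_le_coe_iff] at h2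
    rw [OmegaT_eq ℓρ hbot hΩx, ← EReal.coe_sub, EReal.coe_le_coe_iff,
      dot_add_left, dot_smul_left, dot_smul_left]
    have h3 := mul_le_mul_of_nonneg_left h1 ha
    have h4 := mul_le_mul_of_nonneg_left h2 hb
    have hX : a * ((Ω x).toReal + Tfun ℓρ x) + b * ((Ω x).toReal + Tfun ℓρ x)
        = ((Ω x).toReal + Tfun ℓρ x) := by rw [← add_mul, hab, one_mul]
    nlinarith [h3, h4, hX]
  · -- lower semicontinuity
    intro x y hy
    rw [show conj (OmegaT Ω ℓρ) x = ⨆ p ∈ {q : E ϱ | OmegaT Ω ℓρ q ≠ ⊤},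
        (((dot x p : ℝ) : EReal) - OmegaT Ω ℓρ p) from rfl] at hy
    rw [gt_iff_lt, lt_iSup_iff] at hy
    obtain ⟨p, hp⟩ := hy
    rw [lt_iSup_iff] at hp
    obtain ⟨hpS, hp⟩ := hp
    have hΩp : Ω p ≠ ⊤ := (OmegaT_ne_top_iff ℓρ hbot).mp hpS
    rw [OmegaT_eq ℓρ hbot hΩp, ← EReal.coe_sub] at hp
    induction y with
    | bot =>
      filter_upwards with z
      exact Ne.bot_lt (hproper z).1
    | coe y =>
      rw [EReal.coe_lt_coe_iff] at hp
      have hopen : IsOpen {z : E ϱ | y < dot z p - ((Ω p).toReal + Tfun ℓρ p)} :=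
        isOpen_lt continuous_const ((dot_continuous p).sub continuous_const)
      filter_upwards [hopen.mem_nhds hp] with z hz
      calc ((y : ℝ) : EReal) < ((dot z p - ((Ω p).toReal + Tfun ℓρ p) : ℝ) : EReal) := by
            exact_mod_cast hz
      _ = ((dot z p : ℝ) : EReal) - OmegaT Ω ℓρ p := by
            rw [OmegaT_eq ℓρ hbot hΩp, ← EReal.coe_sub]
      _ ≤ conj (OmegaT Ω ℓρ) z := le_conj _ hpS z
    | top => exact absurd hp (not_lt_of_ge le_top)
  · -- the equality
    intro θ
    refine le_antisymm (le_iInf₂ fun π hπ => conj_OmegaT_le ℓρ hbot hπ θ) ?_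
    obtain ⟨π, hπ, hle⟩ := hkey θ
    exact iInf₂_le_of_le π hπ hle
  · -- attainment
    intro θ
    obtain ⟨π, hπ, hle⟩ := hkey θ
    exact ⟨π, hπ, le_antisymm (conj_OmegaT_le ℓρ hbot hπ θ) hle⟩
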